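/- Let U, V in SpSt(2n,2k) such that U^+V is invertible and N := (U^+V)^{-1} sqrtm(U^+V V^+U) is well-defined (principal matrix square root exists). Then N is symplectic: N^+N = I_{2k}. Moreover U^+VN is equal to its own symplectic inverse transpose in the sense (U^+VN)^+ = U^+VN. -/

import Mathlib

open Matrix

noncomputable section

/-- The standard symplectic matrix `J = [[0, I],[-I, 0]]` of size `2m`. -/
def Jmat (m : ℕ) : Matrix (Fin m ⊕ Fin m) (Fin m ⊕ Fin m) ℝ :=
  Matrix.fromBlocks 0 1 (-1) 0

/-- The symplectic inverse `A⁺ = J₂ₖᵀ Aᵀ J₂ₙ` of a `2n × 2k` real matrix. -/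
def sympInv {n k : ℕ} (A : Matrix (Fin n ⊕ Fin n) (Fin k ⊕ Fin k) ℝ) :
    Matrix (Fin k ⊕ Fin k) (Fin n ⊕ Fin n) ℝ :=
  (Jmat k)ᵀ * Aᵀ * Jmat n

/-! The proof only uses that `A ↦ A⁺` is an involutive anti-automorphism compatible with
inverses. With `A := U⁺V` one has `A⁺ = V⁺U`, so `S² = AA⁺` and `N = A⁻¹S` give
`N⁺N = S (A⁺)⁻¹ A⁻¹ S = S (AA⁺)⁻¹ S = S S⁻² S = 1`, and `AN = S = S⁺`. -/

lemma Jmat_transpose (m : ℕ) : (Jmat m)ᵀ = -Jmat m := by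
  simp [Jmat, fromBlocks_transpose, fromBlocks_neg]

lemma Jmat_mul_self (m : ℕ) : Jmat m * Jmat m = -1 := by
  simp [Jmat, fromBlocks_multiply, ← fromBlocks_one, fromBlocks_neg]

lemma Jmat_mul_transpose (m : ℕ) : Jmat m * (Jmat m)ᵀ = 1 := by
  rw [Jmat_transpose, Matrix.mul_neg, Jmat_mul_self, neg_neg]

lemma transpose_Jmat_mul (m : ℕ) : (Jmat m)ᵀ * Jmat m = 1 := by
  rw [Jmat_transpose, Matrix.neg_mul, Jmat_mul_self, neg_neg]

lemma sympInv_mul {n m k : ℕ} (A : Matrix (Fin n ⊕ Fin n) (Fin m ⊕ Fin m) ℝ)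
    (B : Matrix (Fin m ⊕ Fin m) (Fin k ⊕ Fin k) ℝ) :
    sympInv (A * B) = sympInv B * sympInv A := by
  simp only [sympInv, transpose_mul, Matrix.mul_assoc]
  rw [← Matrix.mul_assoc (Jmat m), Jmat_mul_transpose, Matrix.one_mul]

lemma sympInv_sympInv {n k : ℕ} (A : Matrix (Fin n ⊕ Fin n) (Fin k ⊕ Fin k) ℝ) :
    sympInv (sympInv A) = A := by
  simp only [sympInv, transpose_mul, transpose_transpose, Matrix.mul_assoc]
  rw [Jmat_mul_self, ← Matrix.mul_assoc, ← transpose_mul, Jmat_mul_self]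
  simp

lemma sympInv_one (k : ℕ) : sympInv (1 : Matrix (Fin k ⊕ Fin k) (Fin k ⊕ Fin k) ℝ) = 1 := by
  rw [sympInv, transpose_one, Matrix.mul_one, transpose_Jmat_mul]

lemma sympInv_inv {k : ℕ} (A : Matrix (Fin k ⊕ Fin k) (Fin k ⊕ Fin k) ℝ) :
    sympInv A⁻¹ = (sympInv A)⁻¹ := by
  rw [sympInv, sympInv, Matrix.mul_inv_rev, Matrix.mul_inv_rev, transpose_nonsing_inv,
    inv_eq_left_inv (transpose_Jmat_mul k), inv_eq_left_inv (Jmat_mul_transpose k),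
    Matrix.mul_assoc]

lemma isUnit_sympInv {k : ℕ} {A : Matrix (Fin k ⊕ Fin k) (Fin k ⊕ Fin k) ℝ} (hA : IsUnit A) :
    IsUnit (sympInv A) :=
  IsUnit.of_mul_eq_one (sympInv A⁻¹) <| by
    rw [← sympInv_mul, nonsing_inv_mul A ((isUnit_iff_isUnit_det A).mp hA), sympInv_one]

lemma sympInv_mul_self_inv_mul_eq_one {k : ℕ} {A S : Matrix (Fin k ⊕ Fin k) (Fin k ⊕ Fin k) ℝ}
    (hA : IsUnit A) (hS2 : S * S = A * sympInv A) (hS : sympInv S = S) :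
    sympInv (A⁻¹ * S) * (A⁻¹ * S) = 1 := by
  have hSdet : IsUnit S.det :=
    (isUnit_iff_isUnit_det S).mp <| isUnit_of_mul_isUnit_left (hS2 ▸ hA.mul (isUnit_sympInv hA))
  calc sympInv (A⁻¹ * S) * (A⁻¹ * S) = S * ((sympInv A)⁻¹ * A⁻¹) * S := by
        simp only [sympInv_mul, hS, sympInv_inv, Matrix.mul_assoc]
    _ = S * (S⁻¹ * S⁻¹) * S := by rw [← Matrix.mul_inv_rev, ← hS2, Matrix.mul_inv_rev]
    _ = 1 := by rw [mul_nonsing_inv_cancel_left S _ hSdet, nonsing_inv_mul S hSdet]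

theorem stmt_19_general (n k : ℕ) (U V : Matrix (Fin n ⊕ Fin n) (Fin k ⊕ Fin k) ℝ)
    (hInv : IsUnit (sympInv U * V))
    (S : Matrix (Fin k ⊕ Fin k) (Fin k ⊕ Fin k) ℝ)
    (hS2 : S * S = sympInv U * V * (sympInv V * U))
    (hSplus : sympInv S = S)
    (N : Matrix (Fin k ⊕ Fin k) (Fin k ⊕ Fin k) ℝ)
    (hN : N = (sympInv U * V)⁻¹ * S) :
    sympInv N * N = 1 ∧ sympInv (sympInv U * V * N) = sympInv U * V * N := by
  have hA : sympInv (sympInv U * V) = sympInv V * U := by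
    rw [sympInv_mul, sympInv_sympInv]
  subst hN
  refine ⟨sympInv_mul_self_inv_mul_eq_one hInv (by rw [hS2, hA]) hSplus, ?_⟩
  rw [mul_nonsing_inv_cancel_left _ _ ((isUnit_iff_isUnit_det _).mp hInv), hSplus]

theorem stmt_19 (n k : ℕ) (U V : Matrix (Fin n ⊕ Fin n) (Fin k ⊕ Fin k) ℝ)
    (hU : sympInv U * U = 1) (hV : sympInv V * V = 1)
    (hInv : IsUnit (sympInv U * V))
    (S : Matrix (Fin k ⊕ Fin k) (Fin k ⊕ Fin k) ℝ)
    (hS2 : S * S = sympInv U * V * (sympInv V * U))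
    (hSplus : sympInv S = S)
    (N : Matrix (Fin k ⊕ Fin k) (Fin k ⊕ Fin k) ℝ)
    (hN : N = (sympInv U * V)⁻¹ * S) :
    sympInv N * N = 1 ∧ sympInv (sympInv U * V * N) = sympInv U * V * N :=
  stmt_19_general n k U V hInv S hS2 hSplus N hN
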